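/- Let H, T be endofunctors on Set and M a monad on Set such that H has an algebra lift H̃ to Alg(M) (via a distributive law λ : MH → HM) and T has a Kleisli lift (via a distributive law ς : TM → MT), with T̄ the extension of T to Alg(M) given by the left Kan extension of I ∘ T̂ along the comparison functor I : Kl(M) → Alg(M). If H̃ ≅ T̄, then (T, H) form an M-commuting pair, i.e. there is a natural isomorphism HM ≅ MT, and this isomorphism is an isomorphism of M-algebras: for each set X the square Hm_X ∘ λ_{MX} = (iso) ∘ m_{TX} ∘ M(iso)⁻¹ commutes, where HMX carries the algebra structure Hm_X ∘ λ_{MX} and MTX the free algebra structure m_{TX}. -/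

import Mathlib

open CategoryTheory

universe u

namespace OnCoalgebrasOverAlgebras

/-- A distributive law `λ : MH ⟶ HM` of a monad `M` on `Set` over an endofunctor `H`,
equivalently (the data of) a lifting `H̃` of `H` to the Eilenberg–Moore category of `M`:
it satisfies `λ ∘ u_H = Hu` and `λ ∘ m_H = Hm ∘ λ_M ∘ Mλ`. -/
structure DistLaw (M : Monad (Type u)) (H : Type u ⥤ Type u) where
  app : ∀ X : Type u, M.toFunctor.obj (H.obj X) → H.obj (M.toFunctor.obj X)
  naturality : ∀ {X Y : Type u} (f : X → Y) (z : M.toFunctor.obj (H.obj X)),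
    app Y (M.toFunctor.map (H.map (TypeCat.ofHom f)) z)
      = H.map (M.toFunctor.map (TypeCat.ofHom f)) (app X z)
  unit : ∀ (X : Type u) (z : H.obj X),
    app X (M.η.app (H.obj X) z) = H.map (M.η.app X) z
  mul : ∀ (X : Type u) (z : M.toFunctor.obj (M.toFunctor.obj (H.obj X))),
    app X (M.μ.app (H.obj X) z)
      = H.map (M.μ.app X) (app (M.toFunctor.obj X) (M.toFunctor.map (TypeCat.ofHom (app X)) z))

/-- The terminal sequence `1, H1, H²1, …` of an endofunctor `H` on `Set`. -/
def TObj (H : Type u ⥤ Type u) : ℕ → Type u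
  | 0 => PUnit
  | n + 1 => H.obj (TObj H n)

/-- The connecting maps `Hⁿt : H^{n+1}1 → Hⁿ1` of the terminal sequence,
where `t : H1 → 1` is the unique map. -/
def TMap (H : Type u ⥤ Type u) : ∀ n : ℕ, TObj H (n + 1) → TObj H n
  | 0 => fun _ => PUnit.unit
  | n + 1 => H.map (TypeCat.ofHom (TMap H n))

/-- The limit `L = {(x_n) | Hⁿt (x_{n+1}) = x_n}` of the terminal sequence of `H`. -/
def L (H : Type u ⥤ Type u) : Type u :=
  { x : ∀ n, TObj H n // ∀ n, TMap H n (x (n + 1)) = x n }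

/-- The limit projections `p_n : L → Hⁿ1`. -/
def pr (H : Type u ⥤ Type u) (n : ℕ) : L H → TObj H n := fun x => x.1 n

/-- The `M`-algebra structures `a_n : MHⁿ1 → Hⁿ1` on the terminal sequence,
defined by `a₀ : M1 → 1` the unique map and `a_{n+1} = H a_n ∘ λ_{Hⁿ1}`. -/
def aStr {M : Monad (Type u)} {H : Type u ⥤ Type u} (l : DistLaw M H) :
    ∀ n : ℕ, M.toFunctor.obj (TObj H n) → TObj H n
  | 0 => fun _ => PUnit.unit
  | n + 1 => fun z => H.map (TypeCat.ofHom (aStr l n)) (l.app (TObj H n) z)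

/-- The cone `α_n : C → Hⁿ1` over the terminal sequence induced by an `H`-coalgebra
structure `c : C → HC`; `α₀` is the unique map and `α_{n+1} = Hα_n ∘ c`. -/
def alphaCone (H : Type u ⥤ Type u) {C : Type u} (c : C → H.obj C) :
    ∀ n : ℕ, C → TObj H n
  | 0 => fun _ => PUnit.unit
  | n + 1 => fun z => H.map (TypeCat.ofHom (alphaCone H c n)) (c z)

open Classical in
/-- The canonical ultrametric on the limit `L` of the terminal sequence:
`d(x,y) = 2^{-n}` with `n` least such that `p_n x ≠ p_n y`, and `d(x,y) = 0` if `x = y`. -/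
noncomputable def dL (H : Type u ⥤ Type u) (x y : L H) : ℝ :=
  if x = y then 0 else (2⁻¹ : ℝ) ^ sInf { n : ℕ | x.1 n ≠ y.1 n }

/-- The maps `Hⁿ! : Hⁿ1 → H^{n+1}1` generated by a map `! : 1 → H1`
(under `M0 = 1`, the unique algebra map out of the initial algebra `M0`). -/
def Emb (H : Type u ⥤ Type u) (e : TObj H 0 → TObj H 1) :
    ∀ n : ℕ, TObj H n → TObj H (n + 1)
  | 0 => e
  | n + 1 => H.map (TypeCat.ofHom (Emb H e n))

private lemma mapmap (F : Type u ⥤ Type u) {X Y Z : Type u} (f : X → Y) (g : Y → Z)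
    (x : F.obj X) : F.map (TypeCat.ofHom g) (F.map (TypeCat.ofHom f) x)
      = F.map (TypeCat.ofHom (fun w => g (f w))) x := by
  rw [← Functor.map_comp_apply]
  rfl

/-- The lifting `H̃` of `H` to the Eilenberg–Moore category `Alg(M)` determined by a
distributive law `λ : MH ⟶ HM`: it sends an algebra `(X, x)` to `(HX, Hx ∘ λ_X)`
and satisfies `U^M ∘ H̃ = H ∘ U^M`. -/
def liftF (M : Monad (Type u)) (H : Type u ⥤ Type u) (l : DistLaw M H) :
    M.Algebra ⥤ M.Algebra where
  obj A :=
    { A := H.obj A.A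
      a := TypeCat.ofHom (fun z => H.map A.a (l.app A.A z))
      unit := by
        ext z
        change H.map A.a (l.app A.A (M.η.app (H.obj A.A) z)) = z
        rw [l.unit A.A z, ← Functor.map_comp_apply, A.unit]
        simp
      assoc := by
        change M.μ.app (H.obj A.A) ≫ (TypeCat.ofHom (l.app A.A) ≫ H.map A.a)
          = M.toFunctor.map (TypeCat.ofHom (l.app A.A) ≫ H.map A.a)
            ≫ (TypeCat.ofHom (l.app A.A) ≫ H.map A.a)
        rw [Functor.map_comp]
        ext z
        change H.map A.a (l.app A.A (M.μ.app (H.obj A.A) z))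
          = H.map A.a (l.app A.A (M.toFunctor.map (H.map A.a)
              (M.toFunctor.map (TypeCat.ofHom (l.app A.A)) z)))
        have h := l.naturality A.a (M.toFunctor.map (TypeCat.ofHom (l.app A.A)) z)
        rw [TypeCat.ofHom_eq] at h
        rw [l.mul A.A z, h, ← Functor.map_comp_apply, ← Functor.map_comp_apply,
          A.assoc] }
  map := fun {A B} f =>
    { f := H.map f.f
      h := by
        ext z
        change H.map B.a (l.app B.A (M.toFunctor.map (H.map f.f) z))
          = H.map f.f (H.map A.a (l.app A.A z))
        have h := l.naturality f.f z
        rw [TypeCat.ofHom_eq] at h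
        rw [h, ← Functor.map_comp_apply, ← Functor.map_comp_apply, f.h] }
  map_id A := by
    apply Monad.Algebra.Hom.ext
    show H.map (𝟙 A.A) = 𝟙 (H.obj A.A)
    simp
  map_comp f g := by
    apply Monad.Algebra.Hom.ext
    show H.map (f.f ≫ g.f) = _
    rw [H.map_comp]
    rfl

/-- A distributive law `ς : TM ⟶ MT` of an endofunctor `T` over a monad `M`,
equivalently (the data of) a Kleisli lift `T̂` of `T` to the Kleisli category of `M`:
it satisfies `ς ∘ Tu = u_T` and `ς ∘ Tm = m_T ∘ Mς ∘ ς_M`. -/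
structure KleisliLaw (M : Monad (Type u)) (T : Type u ⥤ Type u) where
  app : ∀ X : Type u, T.obj (M.toFunctor.obj X) → M.toFunctor.obj (T.obj X)
  naturality : ∀ {X Y : Type u} (f : X → Y) (z : T.obj (M.toFunctor.obj X)),
    app Y (T.map (M.toFunctor.map (TypeCat.ofHom f)) z)
      = M.toFunctor.map (T.map (TypeCat.ofHom f)) (app X z)
  unit : ∀ (X : Type u) (z : T.obj X),
    app X (T.map (M.η.app X) z) = M.η.app (T.obj X) z
  mul : ∀ (X : Type u) (z : T.obj (M.toFunctor.obj (M.toFunctor.obj X))),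
    app X (T.map (M.μ.app X) z)
      = M.μ.app (T.obj X) (M.toFunctor.map (TypeCat.ofHom (app X)) (app (M.toFunctor.obj X) z))

/-! Since `U^M H̃ = H U^M` and `U^M F^M = M`, whiskering `H̃ ≅ T̄` by `F^M` and composing
with `T̄ F^M ≅ F^M T` gives `HM = U^M H̃ F^M ≅ U^M T̄ F^M ≅ U^M F^M T = MT`. Each component
underlies an algebra morphism `H̃ (F^M X) ⟶ F^M (TX)`, and its homomorphism square is exactly
the required compatibility with `Hm_X ∘ λ_{MX}` and `m_{TX}`. -/

variable {M : Monad (Type u)} {H T : Type u ⥤ Type u} {Tbar : M.Algebra ⥤ M.Algebra}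

def commutingIsoOfLiftIso (l : DistLaw M H) (hiso : liftF M H l ≅ Tbar)
    (κ : M.free ⋙ Tbar ≅ T ⋙ M.free) : M.toFunctor ⋙ H ≅ T ⋙ M.toFunctor :=
  Functor.isoWhiskerLeft M.free (Functor.isoWhiskerRight hiso M.forget) ≪≫
    Functor.isoWhiskerRight κ M.forget

lemma liftF_obj_free_hom_apply (l : DistLaw M H) {X : Type u} {B : M.Algebra}
    (f : (liftF M H l).obj (M.free.obj X) ⟶ B) (z : M.toFunctor.obj (H.obj (M.toFunctor.obj X))) :
    f.f (H.map (M.μ.app X) (l.app (M.toFunctor.obj X) z)) = B.a (M.toFunctor.map f.f z) :=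
  (ConcreteCategory.congr_hom f.h z).symm

theorem commuting_pair_of_lift_iso_extension_general (M : Monad (Type u))
    (H T : Type u ⥤ Type u)
    (l : DistLaw M H)
    (Tbar : M.Algebra ⥤ M.Algebra)
    (κ : M.free ⋙ Tbar ≅ T ⋙ M.free)
    (hiso : liftF M H l ≅ Tbar) :
    ∃ φ : M.toFunctor ⋙ H ≅ T ⋙ M.toFunctor,
      ∀ (X : Type u) (z : M.toFunctor.obj (H.obj (M.toFunctor.obj X))),
        φ.hom.app X (H.map (M.μ.app X) (l.app (M.toFunctor.obj X) z))
          = M.μ.app (T.obj X) (M.toFunctor.map (φ.hom.app X) z) :=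
  ⟨commutingIsoOfLiftIso l hiso κ, fun X z =>
    liftF_obj_free_hom_apply l (hiso.hom.app (M.free.obj X) ≫ κ.hom.app X) z⟩

/-- **Proposition 2(i).** Let `H, T` be endofunctors on `Set` and `M` a
monad on `Set` such that `H` has an algebra lift `H̃` (via a distributive law
`λ : MH → HM`) and `T` has a Kleisli lift (via a distributive law `ς : TM → MT`), with
`T̄` the extension of `T` to `Alg(M)` (the left Kan extension along the comparison
functor, characterized by `T̄ ∘ F^M ≅ F^M ∘ T`).  If `H̃ ≅ T̄`, then `(T, H)` form an
`M`-commuting pair, i.e. there is a natural isomorphism `HM ≅ MT`, and this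
isomorphism is an isomorphism of `M`-algebras, where `HMX` carries the algebra
structure `Hm_X ∘ λ_{MX}` and `MTX` the free algebra structure `m_{TX}`. -/
theorem commuting_pair_of_lift_iso_extension (M : Monad (Type u))
    (H T : Type u ⥤ Type u)
    (l : DistLaw M H) (ς : KleisliLaw M T)
    (Tbar : M.Algebra ⥤ M.Algebra)
    (κ : M.free ⋙ Tbar ≅ T ⋙ M.free)
    (hiso : liftF M H l ≅ Tbar) :
    ∃ φ : M.toFunctor ⋙ H ≅ T ⋙ M.toFunctor,
      ∀ (X : Type u) (z : M.toFunctor.obj (H.obj (M.toFunctor.obj X))),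
        φ.hom.app X (H.map (M.μ.app X) (l.app (M.toFunctor.obj X) z))
          = M.μ.app (T.obj X) (M.toFunctor.map (φ.hom.app X) z) :=
  commuting_pair_of_lift_iso_extension_general M H T l Tbar κ hiso

end OnCoalgebrasOverAlgebras
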